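/- arXiv:1611.05919 — 4 statements merged into one kernel-verified Lean document; each statement's English description precedes it below -/
import Mathlib

section
/- Let H : 𝔻° → ℂ be holomorphic on the open unit disc with |H(z)| = |c(z-z_0)(z - 1/conj(z_0))| for all z in the disc, where z_0 ∈ 𝔻°, z_0 ≠ 0, and c ≠ 0. Then H(z) = c_1 (z-z_0)(z - 1/conj(z_0)) for some constant c_1 with |c_1| = |c|. -/
/-!
Where `P z = c (z - z₀) (z - 1/conj z₀)` does not vanish, `H / P` is holomorphic of modulus one,
so by the maximum modulus principle it is a unimodular constant `u` near `0`, where `P 0 ≠ 0`.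
The identity theorem then propagates `H = u P` to the whole disc.
-/

open Complex Filter Topology Set

theorem Complex.eventually_eq_mul_of_norm_eq {E : Type*} [NormedAddCommGroup E] [NormedSpace ℂ E]
    {f g : E → ℂ} {a : E} (hf : ∀ᶠ z in 𝓝 a, DifferentiableAt ℂ f z)
    (hg : ∀ᶠ z in 𝓝 a, DifferentiableAt ℂ g z) (hfg : ∀ᶠ z in 𝓝 a, ‖f z‖ = ‖g z‖)
    (hga : g a ≠ 0) : ∀ᶠ z in 𝓝 a, f z = f a / g a * g z := by
  have hg_ne : ∀ᶠ z in 𝓝 a, g z ≠ 0 := hg.self_of_nhds.continuousAt.eventually_ne hga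
  have hquot_diff : ∀ᶠ z in 𝓝 a, DifferentiableAt ℂ (fun z ↦ f z / g z) z := by
    filter_upwards [hf, hg, hg_ne] with z hfz hgz hgz0
    fun_prop (disch := exact hgz0)
  have hquot_norm : ∀ᶠ z in 𝓝 a, ‖f z / g z‖ = 1 := by
    filter_upwards [hfg, hg_ne] with z hfgz hgz0
    rw [norm_div, hfgz, div_self (norm_ne_zero_iff.mpr hgz0)]
  have hmax : IsLocalMax (norm ∘ fun z ↦ f z / g z) a := by
    filter_upwards [hquot_norm] with z hz
    simp only [Function.comp_apply, hz, hquot_norm.self_of_nhds, le_refl]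
  filter_upwards [eventually_eq_of_isLocalMax_norm hquot_diff hmax, hg_ne] with z hz hgz0
  rw [← hz, div_mul_cancel₀ _ hgz0]

theorem Complex.exists_norm_eq_one_eqOn_mul_of_norm_eq {U : Set ℂ} (hU : IsOpen U)
    (hUc : IsPreconnected U) {f g : ℂ → ℂ} (hf : DifferentiableOn ℂ f U)
    (hg : DifferentiableOn ℂ g U) (hfg : ∀ z ∈ U, ‖f z‖ = ‖g z‖) {a : ℂ} (ha : a ∈ U)
    (hga : g a ≠ 0) : ∃ u : ℂ, ‖u‖ = 1 ∧ EqOn f (fun z ↦ u * g z) U := by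
  have hU_nhds : U ∈ 𝓝 a := hU.mem_nhds ha
  refine ⟨f a / g a, by rw [norm_div, hfg a ha, div_self (norm_ne_zero_iff.mpr hga)], ?_⟩
  refine (hf.analyticOnNhd hU).eqOn_of_preconnected_of_eventuallyEq
    (analyticOnNhd_const.mul (hg.analyticOnNhd hU)) hUc ha ?_
  exact eventually_eq_mul_of_norm_eq (hf.eventually_differentiableAt hU_nhds)
    (hg.eventually_differentiableAt hU_nhds) (eventually_of_mem hU_nhds hfg) hga

theorem stmt_9_general (H : ℂ → ℂ) (hH : DifferentiableOn ℂ H (Metric.ball (0:ℂ) 1))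
    (z₀ c : ℂ) (hz₀0 : z₀ ≠ 0) (hc : c ≠ 0)
    (habs : ∀ z ∈ Metric.ball (0:ℂ) 1,
      ‖H z‖ = ‖c * (z - z₀) * (z - (starRingEnd ℂ z₀)⁻¹)‖) :
    ∃ c₁ : ℂ, ‖c₁‖ = ‖c‖ ∧
      ∀ z ∈ Metric.ball (0:ℂ) 1, H z = c₁ * (z - z₀) * (z - (starRingEnd ℂ z₀)⁻¹) := by
  have hP : DifferentiableOn ℂ (fun z ↦ c * (z - z₀) * (z - (starRingEnd ℂ z₀)⁻¹))
      (Metric.ball 0 1) := by fun_prop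
  have hP0 : c * (0 - z₀) * (0 - (starRingEnd ℂ z₀)⁻¹) ≠ 0 := by simp [hc, hz₀0]
  obtain ⟨u, hu, hHP⟩ := exists_norm_eq_one_eqOn_mul_of_norm_eq Metric.isOpen_ball
    (convex_ball 0 1).isPreconnected hH hP habs (Metric.mem_ball_self one_pos) hP0
  refine ⟨u * c, by rw [norm_mul, hu, one_mul], fun z hz ↦ ?_⟩
  rw [hHP hz]
  ring

theorem stmt_9 (H : ℂ → ℂ) (hH : DifferentiableOn ℂ H (Metric.ball (0:ℂ) 1))
    (z₀ c : ℂ) (hz₀ : z₀ ∈ Metric.ball (0:ℂ) 1) (hz₀0 : z₀ ≠ 0) (hc : c ≠ 0)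
    (habs : ∀ z ∈ Metric.ball (0:ℂ) 1,
      ‖H z‖ = ‖c * (z - z₀) * (z - (starRingEnd ℂ z₀)⁻¹)‖) :
    ∃ c₁ : ℂ, ‖c₁‖ = ‖c‖ ∧
      ∀ z ∈ Metric.ball (0:ℂ) 1, H z = c₁ * (z - z₀) * (z - (starRingEnd ℂ z₀)⁻¹) :=
  stmt_9_general H hH z₀ c hz₀0 hc habs
end

section
/- Let L be a bounded self-adjoint operator on a Hilbert space and H a unitary operator with H² = I such that L² commutes with H. If for some positive integers k, m we have (LH)^k((LH)^m - (HL)^m) = 0, then (LH)^m = (HL)^m. -/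
open scoped InnerProductSpace

open ContinuousLinearMap in
/-- Descent: a selfadjoint operator with `T^n y = 0` (n ≥ 1) has `T y = 0`. -/
lemma selfadj_pow_descent {E : Type*} [NormedAddCommGroup E] [InnerProductSpace ℂ E]
    [CompleteSpace E] (T : E →L[ℂ] E) (hT : IsSelfAdjoint T) :
    ∀ n, 1 ≤ n → ∀ y : E, (T ^ n) y = 0 → T y = 0 := by
  intro n
  induction n using Nat.strong_induction_on with
  | _ n ih =>
    intro hn y hy
    rcases eq_or_lt_of_le hn with h1 | h2
    · simpa [← h1] using hy
    · -- n ≥ 2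
      set j := (n + 1) / 2 with hj
      have hj1 : 1 ≤ j := by omega
      have hjn : j < n := by omega
      have h2j : n ≤ 2 * j := by omega
      have hpow : (T ^ (2 * j)) y = 0 := by
        have : T ^ (2 * j) = T ^ (2 * j - n) * T ^ n := by
          rw [← pow_add]; congr 1; omega
        rw [this]
        simp [mul_apply, hy]
      have hTj : (T ^ j) y = 0 := by
        have hsa : IsSelfAdjoint (T ^ j) := hT.pow j
        have : ⟪(T ^ j) y, (T ^ j) y⟫_ℂ = 0 := by
          have hadj : adjoint (T ^ j) = T ^ j := by
            rw [← star_eq_adjoint]; exact hsa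
          calc ⟪(T ^ j) y, (T ^ j) y⟫_ℂ
              = ⟪(adjoint (T ^ j)) ((T ^ j) y), y⟫_ℂ := by
                rw [adjoint_inner_left]
            _ = ⟪(T ^ (2 * j)) y, y⟫_ℂ := by
                rw [hadj, two_mul, pow_add]; rfl
            _ = 0 := by rw [hpow, inner_zero_left]
        exact inner_self_eq_zero.mp this
      exact ih j hjn hj1 y hTj

theorem stmt_12 {E : Type*} [NormedAddCommGroup E] [InnerProductSpace ℂ E] [CompleteSpace E]
    (L H : E →L[ℂ] E) (hL : IsSelfAdjoint L)
    (hHunitary : ContinuousLinearMap.adjoint H * H = 1 ∧ H * ContinuousLinearMap.adjoint H = 1)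
    (hH2 : H * H = 1) (hcomm : L ^ 2 * H = H * L ^ 2)
    (k m : ℕ) (hk : 1 ≤ k) (hm : 1 ≤ m)
    (h : (L * H) ^ k * ((L * H) ^ m - (H * L) ^ m) = 0) :
    (L * H) ^ m = (H * L) ^ m := by
  open ContinuousLinearMap in
  set A := L * H with hA
  set D := (L * H) ^ m - (H * L) ^ m with hD
  -- star H = H
  have hHstar : star H = H := by
    have h1 : star H * H = 1 := by rw [star_eq_adjoint]; exact hHunitary.1
    calc star H = star H * (H * H) := by rw [hH2, mul_one]
      _ = (star H * H) * H := by rw [mul_assoc]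
      _ = H := by rw [h1, one_mul]
  have hLstar : star L = L := hL
  have hAstar : star A = H * L := by
    rw [hA, star_mul, hHstar, hLstar]
  -- normality: star A * A = L^2 = A * star A
  have hM1 : star A * A = L ^ 2 := by
    rw [hAstar, hA]
    calc H * L * (L * H) = H * L ^ 2 * H := by
          rw [sq]; rw [mul_assoc, mul_assoc, mul_assoc]
      _ = L ^ 2 * H * H := by rw [← hcomm]
      _ = L ^ 2 := by rw [mul_assoc, hH2, mul_one]
  have hM2 : A * star A = L ^ 2 := by
    rw [hAstar, hA]
    calc L * H * (H * L) = L * (H * H) * L := by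
          rw [mul_assoc, mul_assoc, mul_assoc]
      _ = L * L := by rw [hH2, mul_one]
      _ = L ^ 2 := (sq L).symm
  have hMsa : IsSelfAdjoint (L ^ 2) := hL.pow 2
  have hcommA : Commute (star A) A := by
    unfold Commute SemiconjBy; rw [hM1, hM2]
  have hAD : A ^ k * D = 0 := h
  -- M^k D x = 0 pointwise, where M = L^2
  have hMkD : ∀ x, ((L ^ 2) ^ k) (D x) = 0 := by
    intro x
    have h2k : A ^ (2 * k) * D = 0 := by
      rw [two_mul, pow_add, mul_assoc, hAD, mul_zero]
    have hinner : ⟪((L ^ 2) ^ (2 * k)) (D x), D x⟫_ℂ = 0 := by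
      have hsp : (L ^ 2) ^ (2 * k) = star (A ^ (2 * k)) * A ^ (2 * k) := by
        rw [star_pow, ← hcommA.mul_pow, hM1]
      have hadj : adjoint (A ^ (2 * k)) = star (A ^ (2 * k)) := (star_eq_adjoint _).symm
      calc ⟪((L ^ 2) ^ (2 * k)) (D x), D x⟫_ℂ
          = ⟪(star (A ^ (2 * k))) ((A ^ (2 * k)) (D x)), D x⟫_ℂ := by
            rw [hsp]; rfl
        _ = ⟪(A ^ (2 * k)) (D x), (A ^ (2 * k)) (D x)⟫_ℂ := by
            rw [← hadj, adjoint_inner_left]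
        _ = 0 := by
            have : (A ^ (2 * k)) (D x) = 0 := by
              have := congrArg (fun T => T x) h2k
              simpa [mul_apply] using this
            rw [this, inner_self_eq_zero]
    -- ⟪M^{2k} y, y⟫ = ‖M^k y‖² = 0
    have hMk0 : ⟪((L ^ 2) ^ k) (D x), ((L ^ 2) ^ k) (D x)⟫_ℂ = 0 := by
      have hsa : IsSelfAdjoint ((L ^ 2) ^ k) := hMsa.pow k
      have hadj : adjoint ((L ^ 2) ^ k) = (L ^ 2) ^ k := by
        rw [← star_eq_adjoint]; exact hsa
      calc ⟪((L ^ 2) ^ k) (D x), ((L ^ 2) ^ k) (D x)⟫_ℂ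
          = ⟪(adjoint ((L ^ 2) ^ k)) (((L ^ 2) ^ k) (D x)), D x⟫_ℂ := by
            rw [adjoint_inner_left]
        _ = ⟪((L ^ 2) ^ (2 * k)) (D x), D x⟫_ℂ := by
            rw [hadj, two_mul, pow_add]; rfl
        _ = 0 := hinner
    exact inner_self_eq_zero.mp hMk0
  -- descend to M (D x) = 0
  have hMD : ∀ x, (L ^ 2) (D x) = 0 := fun x =>
    selfadj_pow_descent (L ^ 2) hMsa k hk (D x) (hMkD x)
  -- A (D x) = 0 and star A (D x) = 0
  have hADx : ∀ x, A (D x) = 0 := by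
    intro x
    have : ⟪A (D x), A (D x)⟫_ℂ = 0 := by
      have hadj : adjoint A = star A := (star_eq_adjoint _).symm
      calc ⟪A (D x), A (D x)⟫_ℂ = ⟪(adjoint A) (A (D x)), D x⟫_ℂ := by
            rw [adjoint_inner_left]
        _ = ⟪(star A * A) (D x), D x⟫_ℂ := by rw [hadj]; rfl
        _ = 0 := by rw [hM1, hMD x, inner_zero_left]
    exact inner_self_eq_zero.mp this
  have hAsDx : ∀ x, (star A) (D x) = 0 := by
    intro x
    have : ⟪(star A) (D x), (star A) (D x)⟫_ℂ = 0 := by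
      have hadj : adjoint (star A) = A := by
        rw [← star_eq_adjoint, star_star]
      calc ⟪(star A) (D x), (star A) (D x)⟫_ℂ
          = ⟪(adjoint (star A)) ((star A) (D x)), D x⟫_ℂ := by
            rw [adjoint_inner_left]
        _ = ⟪(A * star A) (D x), D x⟫_ℂ := by rw [hadj]; rfl
        _ = 0 := by rw [hM2, hMD x, inner_zero_left]
    exact inner_self_eq_zero.mp this
  -- powers kill D x
  have hAmDx : ∀ x, (A ^ m) (D x) = 0 := by
    intro x
    have : A ^ m = A ^ (m - 1) * A := by rw [← pow_succ]; congr 1; omega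
    rw [this]
    simp [mul_apply, hADx x]
  have hAsmDx : ∀ x, ((star A) ^ m) (D x) = 0 := by
    intro x
    have : (star A) ^ m = (star A) ^ (m - 1) * star A := by rw [← pow_succ]; congr 1; omega
    rw [this]
    simp [mul_apply, hAsDx x]
  -- D = 0
  have hD0 : D = 0 := by
    ext x
    have hinner : ⟪D x, D x⟫_ℂ = 0 := by
      have hadjm : adjoint (A ^ m) = (star A) ^ m := by
        rw [← star_eq_adjoint, star_pow]
      have hadjsm : adjoint ((star A) ^ m) = A ^ m := by
        rw [← star_eq_adjoint, star_pow, star_star]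
      have hHLm : (H * L) ^ m = (star A) ^ m := by rw [hAstar]
      calc ⟪D x, D x⟫_ℂ = ⟪(A ^ m) x, D x⟫_ℂ - ⟪((star A) ^ m) x, D x⟫_ℂ := by
            rw [hD, hHLm]
            simp only [ContinuousLinearMap.sub_apply, inner_sub_left, hA]
        _ = ⟪x, ((star A) ^ m) (D x)⟫_ℂ - ⟪x, (A ^ m) (D x)⟫_ℂ := by
            rw [← adjoint_inner_left (A ^ m), ← adjoint_inner_left ((star A) ^ m),
              hadjm, hadjsm]
        _ = 0 := by rw [hAmDx x, hAsmDx x]; simp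
    simpa using inner_self_eq_zero.mp hinner
  have := sub_eq_zero.mp (hD ▸ hD0)
  exact this
end

section
/- Let L be a bounded self-adjoint operator on a Hilbert space and H a unitary with H² = I such that L² commutes with H. For every u in the space and every ℓ ∈ ℕ: if (LH)^ℓ L u = 0 then L u = 0. -/
/-!
Because `H` is an involution commuting with `L²`, we have `L³ = H L² H L`; hence `L H L v = 0`
forces `L³ v = 0`, and for a symmetric `L` this already gives `L v = 0`, since
`‖L w‖² = ⟪w, L² w⟫`. Each factor `L H` of `(L H)^ℓ L u` is removed this way, by induction on `ℓ`.
-/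

namespace LinearMap.IsSymmetric

variable {𝕜 E : Type*} [RCLike 𝕜] [NormedAddCommGroup E] [InnerProductSpace 𝕜 E]
  {T : E →ₗ[𝕜] E}

theorem apply_eq_zero_of_apply_apply_eq_zero (hT : T.IsSymmetric) {v : E}
    (hv : T (T v) = 0) : T v = 0 := by
  rw [← inner_self_eq_zero (𝕜 := 𝕜), hT, hv, inner_zero_right]

theorem apply_eq_zero_of_apply_conj_apply_eq_zero (hT : T.IsSymmetric) {H : E →ₗ[𝕜] E}
    (hH : H * H = 1) (hcomm : T ^ 2 * H = H * T ^ 2) {v : E} (hv : T (H (T v)) = 0) :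
    T v = 0 := by
  have hconj : H * T ^ 2 * H = T ^ 2 := by rw [← hcomm, mul_assoc, hH, mul_one]
  have hcube : T (T (T v)) = 0 := by
    calc T (T (T v)) = (H * T ^ 2 * H) (T v) := by rw [hconj, sq]; rfl
      _ = H (T (T (H (T v)))) := by simp only [Module.End.mul_apply, sq]
      _ = 0 := by rw [hv, map_zero, map_zero]
  exact hT.apply_eq_zero_of_apply_apply_eq_zero <|
    hT.apply_eq_zero_of_apply_apply_eq_zero hcube

theorem apply_eq_zero_of_mul_pow_apply_eq_zero (hT : T.IsSymmetric) {H : E →ₗ[𝕜] E}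
    (hH : H * H = 1) (hcomm : T ^ 2 * H = H * T ^ 2) (l : ℕ) {u : E}
    (hu : ((T * H) ^ l) (T u) = 0) : T u = 0 := by
  induction l generalizing u with
  | zero => simpa using hu
  | succ l ih =>
    rw [pow_succ, Module.End.mul_apply, Module.End.mul_apply] at hu
    exact hT.apply_eq_zero_of_apply_conj_apply_eq_zero hH hcomm (ih hu)

end LinearMap.IsSymmetric

theorem stmt_13_general {E : Type*} [NormedAddCommGroup E] [InnerProductSpace ℂ E] [CompleteSpace E]
    (L H : E →L[ℂ] E) (hL : IsSelfAdjoint L)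
    (hH2 : H * H = 1) (hcomm : L ^ 2 * H = H * L ^ 2)
    (u : E) (l : ℕ) (h : ((L * H) ^ l) (L u) = 0) : L u = 0 := by
  refine hL.isSymmetric.apply_eq_zero_of_mul_pow_apply_eq_zero (H := H) ?_ ?_ l ?_
  · rw [← ContinuousLinearMap.toLinearMap_mul, hH2, ContinuousLinearMap.toLinearMap_one]
  · exact_mod_cast congrArg ContinuousLinearMap.toLinearMap hcomm
  · exact_mod_cast h

theorem stmt_13 {E : Type*} [NormedAddCommGroup E] [InnerProductSpace ℂ E] [CompleteSpace E]
    (L H : E →L[ℂ] E) (hL : IsSelfAdjoint L)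
    (hHunitary : ContinuousLinearMap.adjoint H * H = 1 ∧ H * ContinuousLinearMap.adjoint H = 1)
    (hH2 : H * H = 1) (hcomm : L ^ 2 * H = H * L ^ 2)
    (u : E) (l : ℕ) (h : ((L * H) ^ l) (L u) = 0) : L u = 0 :=
  stmt_13_general L H hL hH2 hcomm u l h
end

section
/- Let L be a bounded self-adjoint operator on a Hilbert space with L² commuting with a self-adjoint unitary H. If L((LH)^m - (HL)^m) = 0 for some positive integer m, then (LH)^m = (HL)^m. -/
open ContinuousLinearMap in
private lemma mul_pow_succ_aux {M : Type*} [Monoid M] (a b : M) (n : ℕ) :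
    (a * b) ^ (n + 1) = a * ((b * a) ^ n * b) := by
  induction n with
  | zero => simp
  | succ n ih =>
    rw [pow_succ, ih, pow_succ]
    simp only [mul_assoc]

theorem stmt_14 {E : Type*} [NormedAddCommGroup E] [InnerProductSpace ℂ E] [CompleteSpace E]
    (L H : E →L[ℂ] E) (hL : IsSelfAdjoint L) (hHsa : IsSelfAdjoint H)
    (hHunitary : ContinuousLinearMap.adjoint H * H = 1 ∧ H * ContinuousLinearMap.adjoint H = 1)
    (hcomm : L ^ 2 * H = H * L ^ 2)
    (m : ℕ) (hm : 1 ≤ m)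
    (h : L * ((L * H) ^ m - (H * L) ^ m) = 0) :
    (L * H) ^ m = (H * L) ^ m := by
  set D : E →L[ℂ] E := (L * H) ^ m - (H * L) ^ m with hD
  have hstar : star D = -D := by
    simp only [hD, star_sub, star_pow, star_mul, hL.star_eq, hHsa.star_eq, neg_sub]
  have hDL : D * L = 0 := by
    have h2 := congrArg star h
    rw [star_mul, star_zero, hstar, hL.star_eq, neg_mul, neg_eq_zero] at h2
    exact h2
  -- L ∘ D = 0 pointwise
  have hLD : ∀ x, L (D x) = 0 := by
    intro x
    have : (L * D) x = (0 : E →L[ℂ] E) x := by rw [h]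
    simpa using this
  obtain ⟨m, rfl⟩ : ∃ n, m = n + 1 := ⟨m - 1, (Nat.succ_pred_eq_of_pos hm).symm⟩
  have hLHpow : (L * H) ^ (m + 1) = L * ((H * L) ^ m * H) := mul_pow_succ_aux L H m
  -- D vanishes on ker L
  have hker : ∀ z, L z = 0 → D z = 0 := by
    intro z hz
    have hHL0 : ((H * L) ^ (m + 1)) z = 0 := by
      rw [pow_succ]
      simp [ContinuousLinearMap.mul_apply, hz]
      exact Function.iterate_fixed (by simp) m
    have hDz : D z = L (((H * L) ^ m * H) z) := by
      simp [hD, ContinuousLinearMap.sub_apply, hHL0, hLHpow, ContinuousLinearMap.mul_apply]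
    have : (inner ℂ (D z) (D z) : ℂ) = 0 := by
      nth_rewrite 1 [hDz]
      rw [← hL.adjoint_eq]
      rw [ContinuousLinearMap.adjoint_inner_left]
      rw [hL.adjoint_eq, hLD z, inner_zero_right]
    simpa [inner_self_eq_zero] using this
  -- D vanishes on closure of range L
  have hrange : ∀ y ∈ (LinearMap.range (L : E →ₗ[ℂ] E)).topologicalClosure, D y = 0 := by
    intro y hy
    have hclosed : IsClosed {x : E | D x = 0} :=
      isClosed_eq D.continuous continuous_const
    have hsub : (LinearMap.range (L : E →ₗ[ℂ] E) : Set E) ⊆ {x : E | D x = 0} := by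
      rintro _ ⟨x, rfl⟩
      have : (D * L) x = (0 : E →L[ℂ] E) x := by rw [hDL]
      simpa using this
    exact closure_minimal hsub hclosed (show y ∈ closure (LinearMap.range (L : E →ₗ[ℂ] E) : Set E) from hy)
  -- orthogonal complement of the closure is in ker L
  have horth : ∀ z ∈ ((LinearMap.range (L : E →ₗ[ℂ] E)).topologicalClosure)ᗮ, L z = 0 := by
    intro z hz
    have key : ∀ x : E, (inner ℂ x (L z) : ℂ) = 0 := by
      intro x
      have hLx : L x ∈ (LinearMap.range (L : E →ₗ[ℂ] E)).topologicalClosure :=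
        Submodule.le_topologicalClosure _ (LinearMap.mem_range_self _ x)
      have := Submodule.inner_right_of_mem_orthogonal hLx hz
      calc (inner ℂ x (L z) : ℂ) = inner ℂ (L x) z := by
            rw [← hL.adjoint_eq, ContinuousLinearMap.adjoint_inner_right, hL.adjoint_eq]
        _ = 0 := this
    have := key (L z)
    simpa [inner_self_eq_zero] using this
  -- conclude
  have hD0 : D = 0 := by
    ext v
    haveI : CompleteSpace ((LinearMap.range (L : E →ₗ[ℂ] E)).topologicalClosure : Submodule ℂ E) :=
      (Submodule.isClosed_topologicalClosure _).completeSpace_coe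
    obtain ⟨y, hy, z, hz, rfl⟩ :=
      ((LinearMap.range (L : E →ₗ[ℂ] E)).topologicalClosure).exists_add_mem_mem_orthogonal v
    simp [map_add, hrange y hy, hker z (horth z hz)]
  have := sub_eq_zero.mp hD0
  exact this
end
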